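/- For an SU(n) bundle V (c_1(V) = 0, trivial determinant), the third Chern class of the second exterior power satisfies c_3(∧²V) = (n − 4)·c_3(V). -/

import Mathlib

/-!
Newton's identities express `6 e₃` through the power sums `p₁, p₂, p₃`. For the pair roots
`x i + x j` (`i < j`) the power sums are `P₁ = (n - 1) p₁` and
`P₃ = (n - 4) p₃ + 3 p₁ p₂`, so when `p₁ = 0` both `6 c₃(∧²V)` and `6 (n - 4) c₃(V)` equal
`2 (n - 4) p₃`. Cancelling the `6` needs an additively torsion-free ring; a general family with
`∑ x i = 0` is the image, under evaluation, of a family with the same property in `ℤ[X_i]`.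
-/

open Finset MvPolynomial

/-- The third elementary-symmetric expression in a family of "Chern roots". -/
def esymm3 {α A : Type*} [DecidableEq α] [CommRing A] (t : Finset α) (f : α → A) : A :=
  ∑ u ∈ t.powersetCard 3, ∏ a ∈ u, f a

theorem map_esymm3 {α A B F : Type*} [DecidableEq α] [CommRing A] [CommRing B] [FunLike F A B]
    [RingHomClass F A B] (g : F) (t : Finset α) (f : α → A) :
    g (esymm3 t f) = esymm3 t (fun a => g (f a)) := by
  simp only [esymm3, map_sum, map_prod]

theorem MvPolynomial.six_mul_esymm_three (σ R : Type*) [Fintype σ] [CommRing R] :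
    6 * esymm σ R 3 = psum σ R 1 ^ 3 - 3 * psum σ R 1 * psum σ R 2 + 2 * psum σ R 3 := by
  have h2 := mul_esymm_eq_sum σ R 2
  have h3 := mul_esymm_eq_sum σ R 3
  simp only [sum_filter, Nat.sum_antidiagonal_eq_sum_range_succ_mk, sum_range_succ,
    sum_range_zero] at h2 h3
  norm_num [esymm_one, esymm_zero] at h2 h3
  rw [psum_one]
  linear_combination 2 * h3 + (∑ i, X i) * h2

theorem six_mul_esymm3 {α A : Type*} [DecidableEq α] [CommRing A] (t : Finset α) (f : α → A) :
    6 * esymm3 t f =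
      (∑ a ∈ t, f a) ^ 3 - 3 * (∑ a ∈ t, f a) * (∑ a ∈ t, f a ^ 2) +
        2 * ∑ a ∈ t, f a ^ 3 := by
  have h := congrArg (aeval (R := ℤ) fun a : t => f a) (six_mul_esymm_three t ℤ)
  have hmap : (univ : Finset t).val.map (fun a => f a.1) = t.val.map f :=
    Multiset.attach_map_val' t.val f
  simp only [map_mul, map_sub, map_add, map_pow, map_ofNat, aeval_esymm_eq_multiset_esymm, hmap,
    esymm_map_val, psum, map_sum, aeval_X, pow_one, sum_coe_sort t f,
    sum_coe_sort t (f · ^ 2), sum_coe_sort t (f · ^ 3)] at h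
  exact h

theorem Finset.sum_sum_eq_two_nsmul_sum_filter_lt_add {ι M : Type*} [Fintype ι] [LinearOrder ι]
    [AddCommMonoid M] (F : ι → ι → M) (hF : ∀ i j, F i j = F j i) :
    ∑ i, ∑ j, F i j =
      2 • ∑ p ∈ univ.filter (fun p : ι × ι => p.1 < p.2), F p.1 p.2 + ∑ i, F i i := by
  have hsplit : ∀ p : ι × ι, F p.1 p.2 = ((if p.1 < p.2 then F p.1 p.2 else 0) +
      (if p.2 < p.1 then F p.1 p.2 else 0)) + (if p.1 = p.2 then F p.1 p.2 else 0) := by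
    intro p
    rcases lt_trichotomy p.1 p.2 with h | h | h
    · simp [h, h.not_gt, h.ne]
    · simp [h]
    · simp [h, h.not_gt, h.ne']
  have hswap : ∑ p ∈ univ.filter (fun p : ι × ι => p.2 < p.1), F p.1 p.2 =
      ∑ p ∈ univ.filter (fun p : ι × ι => p.1 < p.2), F p.1 p.2 :=
    sum_nbij' Prod.swap Prod.swap (by simp) (by simp) (by simp) (by simp) (fun p _ => hF _ _)
  have hdiag : ∑ p ∈ univ.filter (fun p : ι × ι => p.1 = p.2), F p.1 p.2 = ∑ i, F i i := by
    rw [sum_filter, Fintype.sum_prod_type]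
    simp
  rw [← Fintype.sum_prod_type', sum_congr rfl (fun p _ => hsplit p), sum_add_distrib,
    sum_add_distrib, ← sum_filter, ← sum_filter, ← sum_filter, hswap, hdiag, two_nsmul]

section PairRoots

variable {ι A : Type*} [Fintype ι] [CommRing A] (x : ι → A)

theorem two_mul_sum_pairs_add_pow_add [LinearOrder ι] (k : ℕ) :
    2 * ∑ p ∈ univ.filter (fun p : ι × ι => p.1 < p.2), (x p.1 + x p.2) ^ k +
        2 ^ k * ∑ i, x i ^ k = ∑ i, ∑ j, (x i + x j) ^ k := by
  rw [sum_sum_eq_two_nsmul_sum_filter_lt_add (fun i j => (x i + x j) ^ k)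
    (fun i j => by rw [add_comm]), two_nsmul, two_mul, mul_sum]
  simp only [← two_mul, mul_pow]

theorem sum_sum_add :
    ∑ i, ∑ j, (x i + x j) = 2 * Fintype.card ι * ∑ i, x i := by
  simp only [sum_add_distrib, sum_const, card_univ, nsmul_eq_mul, ← mul_sum]
  ring

theorem sum_sum_add_pow_three :
    ∑ i, ∑ j, (x i + x j) ^ 3 =
      2 * Fintype.card ι * ∑ i, x i ^ 3 + 6 * (∑ i, x i) * ∑ i, x i ^ 2 := by
  have hexpand : ∀ i j,
      (x i + x j) ^ 3 = x i ^ 3 + 3 * x i ^ 2 * x j + 3 * x i * x j ^ 2 + x j ^ 3 :=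
    fun i j => by ring
  simp only [hexpand, sum_add_distrib, ← mul_sum, sum_const, card_univ, nsmul_eq_mul, ← sum_mul]
  ring

theorem esymm3_pairs_eq_of_sum_eq_zero [LinearOrder ι] [IsAddTorsionFree A]
    (hsum : ∑ i, x i = 0) :
    esymm3 (univ.filter (fun p : ι × ι => p.1 < p.2)) (fun p => x p.1 + x p.2) =
      ((Fintype.card ι : ℤ) - 4) • esymm3 univ x := by
  have hP1 : ∑ p ∈ univ.filter (fun p : ι × ι => p.1 < p.2), (x p.1 + x p.2) = 0 := by
    have h := two_mul_sum_pairs_add_pow_add x 1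
    simp only [pow_one, sum_sum_add, hsum, mul_zero, add_zero] at h
    exact nsmul_right_injective two_ne_zero (by simpa [two_nsmul, two_mul] using h)
  have hP3 := two_mul_sum_pairs_add_pow_add x 3
  rw [sum_sum_add_pow_three, hsum] at hP3
  have hpairs :=
    six_mul_esymm3 (univ.filter (fun p : ι × ι => p.1 < p.2)) (fun p => x p.1 + x p.2)
  have hroots := six_mul_esymm3 univ x
  rw [hP1] at hpairs
  rw [hsum] at hroots
  refine nsmul_right_injective (by norm_num : (6 : ℕ) ≠ 0) ?_
  simp only [nsmul_eq_mul, zsmul_eq_mul, Int.cast_sub, Int.cast_natCast, Nat.cast_ofNat,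
    Int.cast_ofNat]
  linear_combination hpairs - ((Fintype.card ι : A) - 4) * hroots + hP3

end PairRoots

theorem MvPolynomial.exists_sum_eq_zero_aeval_eq {ι A : Type*} [Fintype ι] [DecidableEq ι]
    [CommRing A] (x : ι → A) (hsum : ∑ i, x i = 0) :
    ∃ y : ι → MvPolynomial ι ℤ, ∑ i, y i = 0 ∧ ∀ i, aeval x (y i) = x i := by
  rcases isEmpty_or_nonempty ι with hι | ⟨⟨i₀⟩⟩
  · exact ⟨X, by simp, by simp⟩
  refine ⟨fun i => X i - if i = i₀ then ∑ j, X j else 0, by simp [sum_sub_distrib], fun i => ?_⟩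
  by_cases hi : i = i₀
  · simp [hi, hsum]
  · simp [hi]

/-- Splitting principle computation: if `V` is an `SU(n)` bundle with Chern roots
`x 1, …, x n` satisfying `∑ x i = 0` (i.e. `c1(V) = 0`), then `∧²V` has Chern
roots `x i + x j` for `i < j`, and its third Chern class satisfies
`c3(∧²V) = (n − 4) · c3(V)`. -/
theorem c3_wedge2
    {A : Type*} [CommRing A] (n : ℕ) (x : Fin n → A)
    (hsum : ∑ i, x i = 0) :
    esymm3 ((Finset.univ : Finset (Fin n × Fin n)).filter (fun p => p.1 < p.2))
        (fun p => x p.1 + x p.2)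
      = ((n : ℤ) - 4) • esymm3 (Finset.univ : Finset (Fin n)) x := by
  obtain ⟨y, hy, hxy⟩ := exists_sum_eq_zero_aeval_eq x hsum
  have h := congrArg (aeval x) (esymm3_pairs_eq_of_sum_eq_zero y hy)
  simpa only [map_esymm3, map_zsmul, map_add, hxy, Fintype.card_fin] using h
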